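/- Suppose generating series F_{g,m} indexed by genus g and divisibility m satisfy the multiple cover relation F_{g,m} = m^{deg - deg'} T_{m, 2g-2+deg'}(F_{g,1}) where T_{m,ℓ} = Σ_{ad=m} a^{ℓ-1} B_a U_d. If F_{g,1}(q) is the q-expansion of an element of (1/Δ)·QMod of weight 2g - 12 + deg', then F_{g,m} lies in (1/Δ^m)·QMod(m), i.e., it is a weakly holomorphic quasimodular form of level Γ_0(m) with pole of order at most m. -/

import Mathlib

/-!
Let `F̂ = Σ_r f_r y^{-r}` be the almost holomorphic function attached to `F_{g,1}`. For `ad = m`,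
`B_a U_d` is realised on functions by the average `d⁻¹ Σ_{j mod d} f((aτ + j)/d)`: summing
`e(n(aτ + j)/d)` over `j` kills the terms with `d ∤ n` (orthogonality of the additive characters
of `ℤ/d`). Since `Im((aτ + j)/d) = (a/d) Im τ`, averaging each `f_r` and rescaling it by `(d/a)^r`
gives the components of the average of `F̂`. For `γ ∈ Γ₀(m)` one has
`[[a, j], [0, d]] γ = γ' [[a, j'], [0, d]]` with `γ' ∈ SL₂(ℤ)` and `j ↦ j'` a permutation of
`ℤ/d`, so the average of `F̂` transforms with the same weight under `Γ₀(m)`. Finally the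
coefficient of `q^{at}` in `B_a U_d F` is the coefficient of `q^{dt}` in `F`, so a pole of order
at most `1` becomes one of order at most `a ≤ m`.
-/

open Complex UpperHalfPlane
open scoped ModularForm MatrixGroups Manifold Real

noncomputable section

/-- `B_a` on formal Laurent series `ℤ → ℂ`: `Σ aₙ qⁿ ↦ Σ aₙ q^{an}`. -/
def Bop (a : ℕ) (f : ℤ → ℂ) : ℤ → ℂ :=
  fun n => if (a : ℤ) ∣ n then f (n / a) else 0

/-- `U_d` on formal Laurent series: `Σ aₙ qⁿ ↦ Σ a_{dn} qⁿ`. -/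
def Uop (d : ℕ) (f : ℤ → ℂ) : ℤ → ℂ :=
  fun n => f (d * n)

/-- The Hecke-type operator `T_{m,ℓ} = Σ_{ad = m} a^{ℓ-1} B_a U_d`. -/
def Theck (m : ℕ) (ℓ : ℤ) (f : ℤ → ℂ) : ℤ → ℂ :=
  fun n => ∑ p ∈ Nat.divisorsAntidiagonal m, (p.1 : ℂ) ^ (ℓ - 1) * Bop p.1 (Uop p.2 f) n

/-- `f` has `q`-expansion with coefficients `a : ℤ → ℂ`: `f(τ) = Σ_n aₙ e^{2πinτ}`. -/
def HasQExp (f : ℍ → ℂ) (a : ℤ → ℂ) : Prop :=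
  ∀ τ : ℍ, HasSum (fun n : ℤ => a n * Complex.exp (2 * π * Complex.I * n * (τ : ℂ))) (f τ)

/-- `f` has a Fourier expansion at the cusp `i∞` with pole of order at most `m`. -/
def MeroPoleLE (m : ℤ) (f : ℍ → ℂ) : Prop :=
  ∃ a : ℤ → ℂ, (∀ n : ℤ, n < -m → a n = 0) ∧ HasQExp f a

/-- The associated almost holomorphic function `f̂ = Σ_{r=0}^p f_r y^{-r}`. -/
def almostSum (p : ℕ) (fr : ℕ → ℍ → ℂ) : ℍ → ℂ :=
  fun τ => ∑ r ∈ Finset.range (p + 1), fr r τ * ((τ.im : ℂ))⁻¹ ^ r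

/-- `f` is a weakly holomorphic quasimodular form of weight `k` for `Γ ≤ SL₂(ℤ)`
with pole of order at most `m` at the cusp. -/
def IsWeaklyQuasimodular (Γ : Subgroup (Matrix.SpecialLinearGroup (Fin 2) ℤ))
    (k m : ℤ) (f : ℍ → ℂ) : Prop :=
  ∃ (p : ℕ) (fr : ℕ → ℍ → ℂ),
    fr 0 = f ∧
    (∀ r ≤ p, MDifferentiable 𝓘(ℂ) 𝓘(ℂ) (fr r) ∧ MeroPoleLE m (fr r)) ∧
    ∀ γ ∈ Γ, almostSum p fr ∣[k] γ = almostSum p fr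

def heckeMatrix (a d : ℕ+) (j : ℤ) : GL (Fin 2) ℝ :=
  .mkOfDetNeZero !![(a : ℝ), j; 0, d] (by simp [Matrix.det_fin_two_of])

lemma heckeMatrix_det_pos (a d : ℕ+) (j : ℤ) : 0 < (heckeMatrix a d j).det.val := by
  simp [heckeMatrix, Matrix.det_fin_two_of]

lemma σ_heckeMatrix (a d : ℕ+) (j : ℤ) : σ (heckeMatrix a d j) = .refl ℝ ℂ :=
  if_pos (heckeMatrix_det_pos a d j)

lemma denom_heckeMatrix (a d : ℕ+) (j : ℤ) (z : ℂ) :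
    denom (heckeMatrix a d j) z = ((d : ℝ) : ℂ) := by
  simp [heckeMatrix, denom]

lemma coe_heckeMatrix_smul (a d : ℕ+) (j : ℤ) (τ : ℍ) :
    ((heckeMatrix a d j • τ : ℍ) : ℂ) = (a * τ + j) / d := by
  rw [coe_smul_of_det_pos (heckeMatrix_det_pos a d j)]
  simp [heckeMatrix, num, denom]

lemma im_heckeMatrix_smul (a d : ℕ+) (j : ℤ) (τ : ℍ) :
    (heckeMatrix a d j • τ).im = a * τ.im / d := by
  rw [← UpperHalfPlane.coe_im, coe_heckeMatrix_smul, Complex.div_natCast_im]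
  simp

lemma exists_heckeMatrix_mul_eq (a d : ℕ+) (γ : SL(2, ℤ)) {c : ℤ} (hc : γ 1 0 = a * d * c)
    {j j' B : ℤ} (hB : a * γ 0 1 + j * γ 1 1 - γ 0 0 * j' = d * B) :
    ∃ γ' : SL(2, ℤ), heckeMatrix a d j * γ = γ' * heckeMatrix a d j' := by
  have hdet : γ 0 0 * γ 1 1 - γ 0 1 * γ 1 0 = 1 := by
    rw [← Matrix.det_fin_two]; exact γ.det_coe
  obtain ⟨γ', hγ'⟩ : ∃ γ' : SL(2, ℤ), (γ' : Matrix (Fin 2) (Fin 2) ℤ) =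
      !![γ 0 0 + j * d * c, B - j * c * j'; d ^ 2 * c, γ 1 1 - d * c * j'] :=
    ⟨⟨_, by rw [Matrix.det_fin_two_of]; linear_combination hdet + (d * c) * hB + γ 0 1 * hc⟩, rfl⟩
  refine ⟨γ', ?_⟩
  have hcR : (γ 1 0 : ℝ) = a * d * c := by exact_mod_cast hc
  have hBR : (a : ℝ) * γ 0 1 + j * γ 1 1 - γ 0 0 * j' = d * B := by exact_mod_cast hB
  ext i k
  fin_cases i <;> fin_cases k <;>
    simp only [heckeMatrix, Units.val_mul, Matrix.GeneralLinearGroup.val_mkOfDetNeZero,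
      Matrix.SpecialLinearGroup.coe_GL_coe_matrix, Matrix.SpecialLinearGroup.map_apply_coe,
      RingHom.mapMatrix_apply, Int.coe_castRingHom, Matrix.map_apply, Matrix.mul_apply,
      Fin.sum_univ_two, Matrix.of_apply, Matrix.cons_val', Matrix.cons_val_fin_one,
      Matrix.cons_val_zero, Matrix.cons_val_one, Fin.isValue, Fin.zero_eta, Fin.mk_one, hγ'] <;>
    push_cast
  · linear_combination (j : ℝ) * hcR
  · linear_combination hBR
  · linear_combination (d : ℝ) * hcR
  · ring

lemma apply_heckeMatrix_smul_of_mul_eq {k : ℤ} {F : ℍ → ℂ}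
    (hF : ∀ (g : SL(2, ℤ)) (z : ℍ), F (g • z) = denom g z ^ k * F z) {a d : ℕ+} {j j' : ℤ}
    {γ γ' : SL(2, ℤ)} (h : heckeMatrix a d j * γ = γ' * heckeMatrix a d j') (τ : ℍ) :
    F (heckeMatrix a d j • γ • τ) = denom γ τ ^ k * F (heckeMatrix a d j' • τ) := by
  have hpt : heckeMatrix a d j • γ • τ = γ' • heckeMatrix a d j' • τ := by
    rw [ModularGroup.sl_moeb, ModularGroup.sl_moeb, smul_smul, h, mul_smul]
  have hden := congrArg (denom · τ) h
  simp only [denom_cocycle_σ, denom_heckeMatrix, σ_ofReal, σ_heckeMatrix,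
    ContinuousAlgEquiv.refl_apply] at hden
  rw [hpt, hF, mul_right_cancel₀ (by simp) (hden.symm.trans (mul_comm _ _))]

def heckeAvg (a d : ℕ+) (f : ℍ → ℂ) (τ : ℍ) : ℂ :=
  (d : ℂ)⁻¹ * ∑ j : ZMod d, f (heckeMatrix a d j.val • τ)

lemma heckeAvg_apply_smul {k : ℤ} {F : ℍ → ℂ}
    (hF : ∀ (g : SL(2, ℤ)) (z : ℍ), F (g • z) = denom g z ^ k * F z) {a d : ℕ+} {γ : SL(2, ℤ)}
    (hγ : γ ∈ CongruenceSubgroup.Gamma0 ((a : ℕ) * d)) (τ : ℍ) :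
    heckeAvg a d F (γ • τ) = denom γ τ ^ k * heckeAvg a d F τ := by
  obtain ⟨c, hc⟩ : ((a * d : ℕ) : ℤ) ∣ γ 1 0 :=
    (ZMod.intCast_zmod_eq_zero_iff_dvd _ _).mp (CongruenceSubgroup.Gamma0_mem.mp hγ)
  push_cast at hc
  have hdet : γ 0 0 * γ 1 1 - γ 0 1 * γ 1 0 = 1 := by
    rw [← Matrix.det_fin_two]; exact γ.det_coe
  have hunit : ((γ 0 0 : ℤ) : ZMod d) * (γ 1 1 : ℤ) = 1 := by
    have := congrArg (Int.cast : ℤ → ZMod d) hdet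
    push_cast [hc] at this
    simpa using this
  -- `perm j` is the unique solution `j'` of `γ₀₀ j' ≡ a γ₀₁ + γ₁₁ j (mod d)`
  set perm : ZMod d → ZMod d := fun j => (γ 1 1 : ℤ) * (a * (γ 0 1 : ℤ) + (γ 1 1 : ℤ) * j)
  have hperm : Function.Bijective perm := by
    refine Finite.injective_iff_bijective.mp fun j₁ j₂ h => ?_
    simp only [perm] at h
    linear_combination ((γ 0 0 : ℤ) : ZMod d) ^ 2 * h -
      (j₁ - j₂) * (((γ 0 0 : ℤ) : ZMod d) * (γ 1 1 : ℤ) + 1) * hunit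
  have hterm : ∀ j : ZMod d, F (heckeMatrix a d j.val • γ • τ) =
      denom γ τ ^ k * F (heckeMatrix a d (perm j).val • τ) := by
    intro j
    obtain ⟨B, hB⟩ : (d : ℤ) ∣ a * γ 0 1 + (j.val : ℤ) * γ 1 1 - γ 0 0 * ((perm j).val : ℤ) := by
      rw [← ZMod.intCast_zmod_eq_zero_iff_dvd]
      push_cast
      simp only [ZMod.natCast_val, ZMod.cast_id', id, perm]
      linear_combination (-(a * ((γ 0 1 : ℤ) : ZMod d) + (γ 1 1 : ℤ) * j)) * hunit
    obtain ⟨γ', hγ'⟩ := exists_heckeMatrix_mul_eq a d γ hc hB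
    exact apply_heckeMatrix_smul_of_mul_eq hF hγ' τ
  simp only [heckeAvg, hterm, ← Finset.mul_sum, Fintype.sum_bijective perm hperm
    (fun j => F (heckeMatrix a d (perm j).val • τ)) (fun j => F (heckeMatrix a d j.val • τ))
    (fun _ => rfl)]
  ring

lemma mdifferentiable_heckeAvg {f : ℍ → ℂ} (hf : MDifferentiable 𝓘(ℂ) 𝓘(ℂ) f) (a d : ℕ+) :
    MDifferentiable 𝓘(ℂ) 𝓘(ℂ) (heckeAvg a d f) := by
  have hsum := MDifferentiable.sum (t := Finset.univ) fun (j : ZMod d) _ =>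
    hf.comp (mdifferentiable_smul (heckeMatrix_det_pos a d j.val))
  have h : heckeAvg a d f = (d : ℂ)⁻¹ • ∑ j : ZMod d, f ∘ (heckeMatrix a d j.val • ·) := by
    funext τ
    simp [heckeAvg, Finset.sum_apply]
  rw [h]
  exact hsum.const_smul _

lemma almostSum_heckeAvg (p : ℕ) (fr : ℕ → ℍ → ℂ) (a d : ℕ+) :
    almostSum p (fun r τ => ((d : ℂ) / a) ^ r * heckeAvg a d (fr r) τ) =
      heckeAvg a d (almostSum p fr) := by
  ext τ
  simp only [almostSum, heckeAvg, im_heckeMatrix_smul, Finset.mul_sum, Finset.sum_mul]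
  rw [Finset.sum_comm]
  refine Finset.sum_congr rfl fun j _ => Finset.sum_congr rfl fun r _ => ?_
  push_cast
  rw [inv_pow, inv_pow, div_pow, div_pow, mul_pow]
  field_simp

lemma hasSum_ite_dvd_iff {b : ℤ} (hb : b ≠ 0) {g : ℤ → ℂ} {s : ℂ} :
    HasSum (fun n => if b ∣ n then g (n / b) else 0) s ↔ HasSum g s := by
  have hinj : Function.Injective (b * ·) := mul_right_injective₀ hb
  have hcomp : (fun n => if b ∣ n then g (n / b) else 0) ∘ (b * ·) = g := by
    ext k
    simp [Int.mul_ediv_cancel_left _ hb]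
  rw [← hinj.hasSum_iff, hcomp]
  rintro n hn
  rw [if_neg]
  rintro ⟨k, rfl⟩
  exact hn ⟨k, rfl⟩

lemma heckeAvg_exp (a d : ℕ+) (n : ℤ) (τ : ℍ) :
    heckeAvg a d (fun z => cexp (2 * π * Complex.I * n * z)) τ =
      if (d : ℤ) ∣ n then cexp (2 * π * Complex.I * (a * (n / d) : ℤ) * τ) else 0 := by
  have hterm : ∀ j : ZMod d, cexp (2 * π * Complex.I * n * (heckeMatrix a d j.val • τ : ℍ)) =
      cexp (2 * π * Complex.I * n * a * τ / d) * ZMod.stdAddChar (j * (n : ZMod d)) := by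
    intro j
    have hchar : ZMod.stdAddChar (j * (n : ZMod d)) =
        cexp (2 * π * Complex.I * (j.val * n : ℤ) / d) := by
      rw [← ZMod.stdAddChar_coe]
      push_cast
      rw [ZMod.natCast_zmod_val]
    rw [hchar, ← Complex.exp_add, coe_heckeMatrix_smul]
    congr 1
    push_cast
    ring
  simp only [heckeAvg, hterm, ← Finset.mul_sum,
    AddChar.sum_mulShift _ (ZMod.isPrimitive_stdAddChar _), ZMod.card,
    ZMod.intCast_zmod_eq_zero_iff_dvd]
  split_ifs with h
  · obtain ⟨m, rfl⟩ := h
    rw [Int.mul_ediv_cancel_left _ (by simp)]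
    field_simp
    congr 1
    push_cast
    field_simp
  · simp

lemma hasQExp_heckeAvg {f : ℍ → ℂ} {F : ℤ → ℂ} (hf : HasQExp f F) (a d : ℕ+) :
    HasQExp (heckeAvg a d f) (Bop a (Uop d F)) := by
  intro τ
  have hsum : HasSum (fun n => F n * heckeAvg a d (fun z => cexp (2 * π * Complex.I * n * z)) τ)
      (heckeAvg a d f τ) := by
    simp only [heckeAvg, Finset.mul_sum, mul_left_comm (F _)]
    exact hasSum_sum fun j _ => (hf _).mul_left _
  simp only [heckeAvg_exp, mul_ite, mul_zero] at hsum
  have hd : (d : ℤ) ≠ 0 := by positivity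
  have ha : (a : ℤ) ≠ 0 := by positivity
  have key : HasSum (fun k : ℤ => F (d * k) * cexp (2 * π * Complex.I * (a * k : ℤ) * τ))
      (heckeAvg a d f τ) := by
    rw [← hasSum_ite_dvd_iff hd]
    convert hsum using 2 with n
    split_ifs with h
    · obtain ⟨k, rfl⟩ := h
      rw [Int.mul_ediv_cancel_left _ hd]
    · rfl
  rw [← hasSum_ite_dvd_iff ha] at key
  convert key using 2 with n
  simp only [Bop, Uop]
  split_ifs with h
  · obtain ⟨k, rfl⟩ := h
    rw [Int.mul_ediv_cancel_left _ ha]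
  · simp

lemma HasQExp.const_mul {f : ℍ → ℂ} {F : ℤ → ℂ} (hf : HasQExp f F) (c : ℂ) :
    HasQExp (fun τ => c * f τ) (fun n => c * F n) :=
  fun τ => by simpa only [mul_assoc] using (hf τ).mul_left c

lemma HasQExp.sum {ι : Type*} (s : Finset ι) (c : ι → ℂ) {f : ι → ℍ → ℂ} {F : ι → ℤ → ℂ}
    (h : ∀ i ∈ s, HasQExp (f i) (F i)) :
    HasQExp (fun τ => ∑ i ∈ s, c i * f i τ) (fun n => ∑ i ∈ s, c i * F i n) := by
  intro τ
  simpa only [Finset.sum_mul, mul_assoc] using hasSum_sum fun i hi => (h i hi τ).mul_left (c i)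

lemma MeroPoleLE.mono {m m' : ℤ} {f : ℍ → ℂ} (hf : MeroPoleLE m f) (h : m ≤ m') :
    MeroPoleLE m' f :=
  let ⟨F, hF, hq⟩ := hf
  ⟨F, fun n hn => hF n (by omega), hq⟩

lemma MeroPoleLE.const_mul {m : ℤ} {f : ℍ → ℂ} (hf : MeroPoleLE m f) (c : ℂ) :
    MeroPoleLE m (fun τ => c * f τ) :=
  let ⟨F, hF, hq⟩ := hf
  ⟨fun n => c * F n, fun n hn => by simp [hF n hn], hq.const_mul c⟩

lemma MeroPoleLE.sum {ι : Type*} (s : Finset ι) (c : ι → ℂ) {m : ℤ} {f : ι → ℍ → ℂ}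
    (h : ∀ i ∈ s, MeroPoleLE m (f i)) : MeroPoleLE m (fun τ => ∑ i ∈ s, c i * f i τ) := by
  choose! F hF hq using h
  exact ⟨_, fun n hn => Finset.sum_eq_zero fun i hi => by rw [hF i hi n hn, mul_zero],
    HasQExp.sum s c hq⟩

lemma MeroPoleLE.heckeAvg {n : ℕ} {f : ℍ → ℂ} (hf : MeroPoleLE n f) (a d : ℕ+) :
    MeroPoleLE (a * n) (heckeAvg a d f) := by
  obtain ⟨F, hF, hq⟩ := hf
  refine ⟨_, fun k hk => ?_, hasQExp_heckeAvg hq a d⟩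
  simp only [Bop, Uop]
  split_ifs with h
  · obtain ⟨t, rfl⟩ := h
    have ha : (0 : ℤ) < a := by positivity
    have hd : (1 : ℤ) ≤ d := by have := d.pos; omega
    rw [Int.mul_ediv_cancel_left _ ha.ne']
    apply hF
    have ht : t < -n := by nlinarith
    nlinarith
  · rfl

lemma slash_eq_self_iff {k : ℤ} {f : ℍ → ℂ} {γ : SL(2, ℤ)} :
    f ∣[k] γ = f ↔ ∀ z, f (γ • z) = denom γ z ^ k * f z :=
  funext_iff.trans (forall_congr' fun z => ModularForm.slash_action_eq'_iff k f γ z)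

lemma almostSum_sum (p : ℕ) {ι : Type*} (s : Finset ι) (c : ι → ℂ) (fr : ι → ℕ → ℍ → ℂ) :
    almostSum p (fun r τ => ∑ i ∈ s, c i * fr i r τ) = ∑ i ∈ s, c i • almostSum p (fr i) := by
  funext τ
  simp only [almostSum, Finset.sum_apply, Pi.smul_apply, smul_eq_mul, Finset.mul_sum,
    Finset.sum_mul]
  rw [Finset.sum_comm]
  exact Finset.sum_congr rfl fun _ _ => Finset.sum_congr rfl fun _ _ => by ring

def IsQuasimodularFamily (Γ : Subgroup SL(2, ℤ)) (k m : ℤ) (p : ℕ) (fr : ℕ → ℍ → ℂ) : Prop :=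
  (∀ r ≤ p, MDifferentiable 𝓘(ℂ) 𝓘(ℂ) (fr r) ∧ MeroPoleLE m (fr r)) ∧
    ∀ γ ∈ Γ, almostSum p fr ∣[k] γ = almostSum p fr

lemma isWeaklyQuasimodular_iff {Γ : Subgroup SL(2, ℤ)} {k m : ℤ} {f : ℍ → ℂ} :
    IsWeaklyQuasimodular Γ k m f ↔ ∃ p fr, fr 0 = f ∧ IsQuasimodularFamily Γ k m p fr :=
  Iff.rfl

namespace IsQuasimodularFamily

variable {Γ : Subgroup SL(2, ℤ)} {k m : ℤ} {p : ℕ}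

lemma mono {fr : ℕ → ℍ → ℂ} (h : IsQuasimodularFamily Γ k m p fr) {Γ' : Subgroup SL(2, ℤ)}
    (hΓ : Γ' ≤ Γ) {m' : ℤ} (hm : m ≤ m') : IsQuasimodularFamily Γ' k m' p fr :=
  ⟨fun r hr => ⟨(h.1 r hr).1, (h.1 r hr).2.mono hm⟩, fun γ hγ => h.2 γ (hΓ hγ)⟩

lemma sum {ι : Type} (s : Finset ι) (c : ι → ℂ) {fr : ι → ℕ → ℍ → ℂ}
    (h : ∀ i ∈ s, IsQuasimodularFamily Γ k m p (fr i)) :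
    IsQuasimodularFamily Γ k m p (fun r τ => ∑ i ∈ s, c i * fr i r τ) := by
  refine ⟨fun r hr => ⟨?_, MeroPoleLE.sum s c fun i hi => ((h i hi).1 r hr).2⟩, fun γ hγ => ?_⟩
  · have hs : (fun τ => ∑ i ∈ s, c i * fr i r τ) = ∑ i ∈ s, c i • fr i r := by
      funext τ
      simp [Finset.sum_apply]
    beta_reduce
    rw [hs]
    exact MDifferentiable.sum fun i hi => ((h i hi).1 r hr).1.const_smul (c i)
  · rw [almostSum_sum, SlashAction.sum_slash]
    exact Finset.sum_congr rfl fun i hi => by rw [ModularForm.SL_smul_slash, (h i hi).2 γ hγ]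

lemma heckeAvg {fr : ℕ → ℍ → ℂ} {n : ℕ} (h : IsQuasimodularFamily ⊤ k n p fr) (a d : ℕ+) :
    IsQuasimodularFamily (CongruenceSubgroup.Gamma0 ((a : ℕ) * d)) k (a * n) p
      (fun r τ => ((d : ℂ) / a) ^ r * _root_.heckeAvg a d (fr r) τ) := by
  refine ⟨fun r hr => ⟨?_, ?_⟩, fun γ hγ => ?_⟩
  · exact mdifferentiable_const.mul (mdifferentiable_heckeAvg ((h.1 r hr).1) a d)
  · exact ((h.1 r hr).2.heckeAvg a d).const_mul _
  · rw [almostSum_heckeAvg, slash_eq_self_iff]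
    exact heckeAvg_apply_smul (fun g => slash_eq_self_iff.mp (h.2 g trivial)) hγ

lemma const_mul {fr : ℕ → ℍ → ℂ} (h : IsQuasimodularFamily Γ k m p fr) (c : ℂ) :
    IsQuasimodularFamily Γ k m p (fun r τ => c * fr r τ) := by
  simpa using sum {()} (fun _ => c) (fr := fun _ => fr) (by simpa using h)

end IsQuasimodularFamily

/-- The components of `T_{m,ℓ}` applied to the almost holomorphic function with components `fr`:
the factor `(d/a)^r` absorbs `Im((aτ+j)/d) = (a/d) Im τ`, and `toPNat'` is the identity on the
divisors of `m`. -/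
def heckeFamily (m : ℕ) (ℓ : ℤ) (fr : ℕ → ℍ → ℂ) : ℕ → ℍ → ℂ :=
  fun r τ => ∑ q ∈ m.divisorsAntidiagonal, (q.1 : ℂ) ^ (ℓ - 1) *
    (((q.2.toPNat' : ℂ) / q.1.toPNat') ^ r * heckeAvg q.1.toPNat' q.2.toPNat' (fr r) τ)

lemma toPNat'_coe_of_mem_divisorsAntidiagonal {m : ℕ} {q : ℕ × ℕ}
    (hq : q ∈ m.divisorsAntidiagonal) : (q.1.toPNat' : ℕ) = q.1 ∧ (q.2.toPNat' : ℕ) = q.2 :=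
  ⟨PNat.toPNat'_coe (Nat.pos_of_mem_divisors (Nat.fst_mem_divisors_of_mem_antidiagonal hq)),
    PNat.toPNat'_coe (Nat.pos_of_mem_divisors (Nat.snd_mem_divisors_of_mem_antidiagonal hq))⟩

lemma hasQExp_heckeFamily {m : ℕ} {ℓ : ℤ} {fr : ℕ → ℍ → ℂ} {F : ℤ → ℂ} (hf : HasQExp (fr 0) F) :
    HasQExp (heckeFamily m ℓ fr 0) (Theck m ℓ F) := by
  have h := HasQExp.sum m.divisorsAntidiagonal (fun q => (q.1 : ℂ) ^ (ℓ - 1))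
    fun q _ => hasQExp_heckeAvg hf q.1.toPNat' q.2.toPNat'
  convert h using 2 with n
  · simp [heckeFamily]
  · refine Finset.sum_congr rfl fun q hq => ?_
    obtain ⟨h1, h2⟩ := toPNat'_coe_of_mem_divisorsAntidiagonal hq
    rw [h1, h2]

lemma IsQuasimodularFamily.heckeFamily {k : ℤ} {p : ℕ} {fr : ℕ → ℍ → ℂ}
    (h : IsQuasimodularFamily ⊤ k 1 p fr) (m : ℕ) (ℓ : ℤ) :
    IsQuasimodularFamily (CongruenceSubgroup.Gamma0 m) k m p (heckeFamily m ℓ fr) := by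
  refine sum _ _ fun q hq => ?_
  obtain ⟨h1, h2⟩ := toPNat'_coe_of_mem_divisorsAntidiagonal hq
  obtain ⟨hqm, hm⟩ := Nat.mem_divisorsAntidiagonal.mp hq
  refine ((h : IsQuasimodularFamily ⊤ k ((1 : ℕ) : ℤ) p fr).heckeAvg _ _).mono ?_ ?_
  · rw [h1, h2, hqm]
  · rw [h1, Nat.cast_one, mul_one, Nat.cast_le]
    exact Nat.le_of_dvd (Nat.pos_of_ne_zero hm) ⟨q.2, hqm.symm⟩

theorem multiple_cover_quasimodularity_general (m : ℕ) (g : ℕ) (dg dg' : ℤ)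
    (F1 : ℤ → ℂ) (f1 : ℍ → ℂ)
    (h1 : IsWeaklyQuasimodular ⊤ (2 * g - 12 + dg') 1 f1)
    (h2 : HasQExp f1 F1) :
    ∃ fm : ℍ → ℂ,
      IsWeaklyQuasimodular (CongruenceSubgroup.Gamma0 m) (2 * g - 12 + dg') m fm ∧
      HasQExp fm (fun n => (m : ℂ) ^ (dg - dg') * Theck m (2 * g - 2 + dg') F1 n) := by
  obtain ⟨p, fr, rfl, hfr⟩ := isWeaklyQuasimodular_iff.mp h1
  exact ⟨_, isWeaklyQuasimodular_iff.mpr ⟨p, _, rfl, (hfr.heckeFamily m _).const_mul _⟩,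
    (hasQExp_heckeFamily h2).const_mul _⟩

/-- Suppose the generating series satisfy the multiple cover relation
`F_{g,m} = m^{deg - deg'} T_{m, 2g-2+deg'}(F_{g,1})`. If `F_{g,1}` is the
`q`-expansion of an element of `(1/Δ)·QMod` of weight `2g - 12 + deg'` (a weakly
holomorphic quasimodular form for `SL₂(ℤ)` with pole of order at most `1`), then
`F_{g,m}` lies in `(1/Δ^m)·QMod(m)`: it is the `q`-expansion of a weakly
holomorphic quasimodular form of weight `2g - 12 + deg'` for `Γ₀(m)` with pole of
order at most `m`. -/
theorem multiple_cover_quasimodularity (m : ℕ) (hm : 0 < m) (g : ℕ) (dg dg' : ℤ)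
    (F1 : ℤ → ℂ) (f1 : ℍ → ℂ)
    (h1 : IsWeaklyQuasimodular ⊤ (2 * g - 12 + dg') 1 f1)
    (h2 : HasQExp f1 F1) :
    ∃ fm : ℍ → ℂ,
      IsWeaklyQuasimodular (CongruenceSubgroup.Gamma0 m) (2 * g - 12 + dg') m fm ∧
      HasQExp fm (fun n => (m : ℂ) ^ (dg - dg') * Theck m (2 * g - 2 + dg') F1 n) :=
  multiple_cover_quasimodularity_general m g dg dg' F1 f1 h1 h2
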